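/- Let n ≥ 1, ε ∈ {+1, −1}, γ = (γ_1,…,γ_n) ∈ ℕ_0^n with l = γ_1 + ⋯ + γ_n, and t = (t_1,…,t_n) ∈ ℂ^n. Then ∫_{ℂ^n} (∏_{j=1}^n z_j^{γ_j}) · exp(−2π Σ_{j=1}^n z_j·conj(z_j)) · exp(−2π ε i Σ_{j=1}^n (t_j z_j + conj(t_j z_j))) ∏_{j=1}^n d_ℂ z_j = (−ε i)^l · (∏_{j=1}^n conj(t_j)^{γ_j}) · exp(−2π Σ_{j=1}^n t_j·conj(t_j)). -/

import Mathlib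

/-!
Write `t z + conj (t z)` as `p z + q conj z` and treat `p` and `q` as independent complex
parameters. For `k = 0`, the integral `∫ z ^ k exp (-b ‖z‖² + p z + q conj z)` over `ℂ ≅ ℝ²` splits
into two one-dimensional Gaussian integrals, which give `π / b · exp (p q / b)`. The integral is
holomorphic in `p`, and differentiating in `p` raises `k` by one, so its value is
`π / b · (q / b) ^ k · exp (p q / b)`. Taking `p = -2πεi t` and `q = -2πεi conj t` gives the
one-dimensional case, and the `n`-dimensional integral is a product of such factors.
-/

open Real MeasureTheory ComplexConjugate Complex
open scoped Nat

section

variable {V : Type*} [NormedAddCommGroup V] [InnerProductSpace ℝ V] [FiniteDimensional ℝ V]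
  [MeasurableSpace V] [BorelSpace V]

theorem integrable_norm_pow_mul_exp_neg_mul_sq_norm_add_mul_norm {β : ℝ} (hβ : 0 < β) (c : ℝ)
    (k : ℕ) : Integrable (fun v : V => ‖v‖ ^ k * rexp (-β * ‖v‖ ^ 2 + c * ‖v‖)) := by
  have hgauss : Integrable (fun v : V => rexp (-(β / 2) * ‖v‖ ^ 2)) := by
    have h := (GaussianFourier.integrable_cexp_neg_mul_sq_norm_add (b := ((β / 2 : ℝ) : ℂ))
      (by simpa using hβ) 0 (0 : V)).norm
    simp only [Complex.norm_exp] at h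
    convert h using 2 with v
    norm_cast
    simp
  refine (hgauss.const_mul (k ! * rexp ((|c| + 1) ^ 2 / (2 * β)))).mono' (by fun_prop)
    (ae_of_all _ fun v => ?_)
  set r := ‖v‖
  have hr : 0 ≤ r := norm_nonneg v
  have hpow : r ^ k ≤ k ! * rexp r := by
    have := Real.pow_div_factorial_le_exp r hr k
    rwa [div_le_iff₀ (by positivity), mul_comm] at this
  have hsq : r + (-β * r ^ 2 + c * r) ≤ (|c| + 1) ^ 2 / (2 * β) + -(β / 2) * r ^ 2 := by
    have hsplit : (|c| + 1) ^ 2 / (2 * β) + -(β / 2) * r ^ 2 - (r + (-β * r ^ 2 + c * r)) =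
        (|c| + 1 - β * r) ^ 2 / (2 * β) + (|c| - c) * r := by
      field_simp
      ring
    have := mul_nonneg (sub_nonneg.2 (le_abs_self c)) hr
    have : 0 ≤ (|c| + 1 - β * r) ^ 2 / (2 * β) := by positivity
    linarith
  rw [Real.norm_of_nonneg (by positivity)]
  calc r ^ k * rexp (-β * r ^ 2 + c * r) ≤ k ! * rexp r * rexp (-β * r ^ 2 + c * r) := by
        gcongr
    _ = k ! * rexp (r + (-β * r ^ 2 + c * r)) := by rw [mul_assoc, ← Real.exp_add]
    _ ≤ k ! * rexp ((|c| + 1) ^ 2 / (2 * β) + -(β / 2) * r ^ 2) := by gcongr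
    _ = _ := by rw [Real.exp_add]; ring

end

theorem norm_cexp_neg_mul_sq_norm_add_mul_conj_le (b p q z : ℂ) :
    ‖cexp (-b * ‖z‖ ^ 2 + p * z + q * conj z)‖ ≤
      rexp (-b.re * ‖z‖ ^ 2 + (‖p‖ + ‖q‖) * ‖z‖) := by
  rw [Complex.norm_exp]
  gcongr
  have hp : (p * z).re ≤ ‖p‖ * ‖z‖ := (re_le_norm _).trans (norm_mul _ _).le
  have hq : (q * conj z).re ≤ ‖q‖ * ‖z‖ := (re_le_norm _).trans (by simp)
  simp only [add_re, neg_mul, neg_re, mul_re, ← ofReal_pow, ofReal_re, ofReal_im, mul_zero,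
    sub_zero]
  simp only [mul_re] at hp hq
  linarith

theorem integrable_pow_mul_cexp_neg_mul_sq_norm_add_mul_conj {b : ℂ} (hb : 0 < b.re) (k : ℕ)
    (p q : ℂ) :
    Integrable (fun z : ℂ => z ^ k * cexp (-b * ‖z‖ ^ 2 + p * z + q * conj z)) :=
  (integrable_norm_pow_mul_exp_neg_mul_sq_norm_add_mul_norm hb (‖p‖ + ‖q‖) k).mono'
    (by fun_prop) (ae_of_all _ fun z => by
      rw [norm_mul, norm_pow, neg_mul]
      gcongr
      simpa using norm_cexp_neg_mul_sq_norm_add_mul_conj_le b p q z)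

theorem hasDerivAt_integral_pow_mul_cexp_neg_mul_sq_norm_add_mul_conj {b : ℂ} (hb : 0 < b.re)
    (k : ℕ) (q p₀ : ℂ) :
    HasDerivAt (fun p => ∫ z : ℂ, z ^ k * cexp (-b * ‖z‖ ^ 2 + p * z + q * conj z))
      (∫ z : ℂ, z ^ (k + 1) * cexp (-b * ‖z‖ ^ 2 + p₀ * z + q * conj z)) p₀ := by
  have hderiv : ∀ z p, HasDerivAt (fun p => z ^ k * cexp (-b * ‖z‖ ^ 2 + p * z + q * conj z))
      (z ^ (k + 1) * cexp (-b * ‖z‖ ^ 2 + p * z + q * conj z)) p := fun z p =>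
    ((((hasDerivAt_mul_const z).const_add _).add_const _).cexp.const_mul (z ^ k)).congr_deriv
      (by ring)
  have hbound : ∀ z, ∀ p ∈ Metric.ball p₀ 1,
      ‖z ^ (k + 1) * cexp (-b * ‖z‖ ^ 2 + p * z + q * conj z)‖ ≤
        ‖z‖ ^ (k + 1) * rexp (-b.re * ‖z‖ ^ 2 + (‖p₀‖ + 1 + ‖q‖) * ‖z‖) := fun z p hp => by
    have hp : ‖p‖ ≤ ‖p₀‖ + 1 := by
      linarith [norm_le_norm_add_norm_sub' p p₀, (mem_ball_iff_norm.1 hp).le]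
    rw [norm_mul, norm_pow]
    gcongr
    exact (norm_cexp_neg_mul_sq_norm_add_mul_conj_le b p q z).trans (by gcongr)
  exact (hasDerivAt_integral_of_dominated_loc_of_deriv_le (Metric.ball_mem_nhds p₀ one_pos)
    (.of_forall fun p => (integrable_pow_mul_cexp_neg_mul_sq_norm_add_mul_conj hb k p q).1)
    (integrable_pow_mul_cexp_neg_mul_sq_norm_add_mul_conj hb k p₀ q)
    (integrable_pow_mul_cexp_neg_mul_sq_norm_add_mul_conj hb (k + 1) p₀ q).1
    (ae_of_all _ hbound)
    (integrable_norm_pow_mul_exp_neg_mul_sq_norm_add_mul_norm hb _ _)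
    (ae_of_all _ fun z p _ => hderiv z p)).2

theorem integral_cexp_neg_mul_sq_norm_add_mul_conj {b : ℂ} (hb : 0 < b.re) (p q : ℂ) :
    ∫ z : ℂ, cexp (-b * ‖z‖ ^ 2 + p * z + q * conj z) = π / b * cexp (p * q / b) := by
  have hcoord : ∀ v : Fin 2 → ℝ,
      -b * ‖measurableEquivPi.symm v‖ ^ 2 + p * measurableEquivPi.symm v +
          q * conj (measurableEquivPi.symm v) =
        -b * ∑ i, (v i : ℂ) ^ 2 + ∑ i, ![p + q, I * (p - q)] i * v i := fun v => by
    rw [measurableEquivPi_symm_apply, ← ofReal_pow, ← normSq_eq_norm_sq, normSq_add_mul_I]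
    simp only [Fin.sum_univ_two, Matrix.cons_val_zero, Matrix.cons_val_one, map_add, map_mul,
      conj_ofReal, conj_I]
    push_cast
    ring
  rw [← volume_preserving_equiv_pi.symm.integral_comp']
  simp_rw [hcoord]
  rw [GaussianFourier.integral_cexp_neg_mul_sum_add hb, Fintype.card_fin, Fin.sum_univ_two]
  have hb0 : b ≠ 0 := fun h => by simp [h] at hb
  have hexp : ((p + q) ^ 2 + (I * (p - q)) ^ 2) / (4 * b) = p * q / b := by
    rw [mul_pow, I_sq]
    field_simp
    ring
  simp only [Matrix.cons_val_zero, Matrix.cons_val_one, hexp]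
  norm_num

theorem integral_pow_mul_cexp_neg_mul_sq_norm_add_mul_conj {b : ℂ} (hb : 0 < b.re)
    (k : ℕ) (p q : ℂ) :
    ∫ z : ℂ, z ^ k * cexp (-b * ‖z‖ ^ 2 + p * z + q * conj z) =
      π / b * (q / b) ^ k * cexp (p * q / b) := by
  induction k generalizing p with
  | zero => simpa using integral_cexp_neg_mul_sq_norm_add_mul_conj hb p q
  | succ k ih =>
    have hclosed : HasDerivAt (fun p => π / b * (q / b) ^ k * cexp (p * q / b))
        (π / b * (q / b) ^ (k + 1) * cexp (p * q / b)) p :=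
      (((hasDerivAt_mul_const q).div_const b).cexp.const_mul _).congr_deriv (by ring)
    rw [← funext ih] at hclosed
    exact (hasDerivAt_integral_pow_mul_cexp_neg_mul_sq_norm_add_mul_conj hb k q p).unique hclosed

theorem gaussian_fourier_complex {ε : ℝ} (hε : ε ^ 2 = 1) (k : ℕ) (t : ℂ) :
    ∫ z : ℂ, z ^ k * cexp (-(2 * π * (z * conj z))) *
        cexp (-(2 * π * (ε : ℂ) * I * (t * z + conj (t * z)))) ∂((2 : ENNReal) • volume) =
      (-(ε : ℂ) * I) ^ k * conj t ^ k * cexp (-(2 * π * (t * conj t))) := by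
  have hexponent : ∀ z : ℂ,
      -(2 * π * (z * conj z)) + -(2 * π * (ε : ℂ) * I * (t * z + conj (t * z))) =
        -(2 * π : ℂ) * ‖z‖ ^ 2 + -(2 * π * ε * I) * t * z + -(2 * π * ε * I) * conj t * conj z :=
    fun z => by rw [mul_conj', map_mul]; ring
  have h2π : 0 < (2 * π : ℂ).re := by norm_cast; positivity
  simp_rw [mul_assoc _ (cexp _), ← Complex.exp_add, hexponent, integral_smul_measure,
    integral_pow_mul_cexp_neg_mul_sq_norm_add_mul_conj h2π]
  have hε' : (ε : ℂ) ^ 2 = 1 := by exact_mod_cast hε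
  have hπ : (π : ℂ) ≠ 0 := ofReal_ne_zero.2 pi_ne_zero
  field_simp
  simp only [hε', I_sq, ENNReal.toReal_ofNat, real_smul, neg_pow (_ * _), mul_pow, ofReal_ofNat]
  ring_nf

theorem gaussian_fourier_complex_multi_general (n : ℕ) (ε : ℝ)
    (hε : ε = 1 ∨ ε = -1) (γ : Fin n → ℕ) (t : Fin n → ℂ) :
    (∫ z : Fin n → ℂ,
        (∏ j, (z j) ^ (γ j)) *
          Complex.exp (-(2 * π * ∑ j, z j * conj (z j))) *
          Complex.exp (-(2 * π * (ε : ℂ) * Complex.I *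
            ∑ j, (t j * z j + conj (t j * z j))))
      ∂(MeasureTheory.Measure.pi fun _ : Fin n => (2 : ENNReal) • (volume : Measure ℂ))) =
      (-(ε : ℂ) * Complex.I) ^ (∑ j, γ j) * (∏ j, (conj (t j)) ^ (γ j)) *
        Complex.exp (-(2 * π * ∑ j, t j * conj (t j))) := by
  have hε2 : ε ^ 2 = 1 := by rcases hε with rfl | rfl <;> norm_num
  have : SigmaFinite ((2 : ENNReal) • (volume : Measure ℂ)) :=
    have := IsFiniteMeasureOnCompacts.smul (volume : Measure ℂ) (by simp : (2 : ENNReal) ≠ ⊤)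
    inferInstance
  calc _ = ∫ z : Fin n → ℂ, ∏ j, (z j ^ γ j * cexp (-(2 * π * (z j * conj (z j)))) *
          cexp (-(2 * π * (ε : ℂ) * I * (t j * z j + conj (t j * z j)))))
        ∂(Measure.pi fun _ => (2 : ENNReal) • volume) := by
        simp only [Finset.prod_mul_distrib, ← Complex.exp_sum, ← Finset.mul_sum,
          Finset.sum_neg_distrib]
    _ = ∏ j, ((-(ε : ℂ) * I) ^ γ j * conj (t j) ^ γ j * cexp (-(2 * π * (t j * conj (t j))))) := by
        rw [integral_fintype_prod_eq_prod (fun j w => w ^ γ j * cexp (-(2 * π * (w * conj w))) *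
          cexp (-(2 * π * (ε : ℂ) * I * (t j * w + conj (t j * w)))))]
        exact Finset.prod_congr rfl fun j _ => gaussian_fourier_complex hε2 (γ j) (t j)
    _ = _ := by
        simp only [Finset.prod_mul_distrib, Finset.prod_pow_eq_pow_sum, ← Complex.exp_sum,
          ← Finset.mul_sum, Finset.sum_neg_distrib]

/-- Multivariate complex Gaussian integral with monomial:
`∫_{ℂ^n} (∏ z_j^{γ_j}) exp(−2π Σ z_j conj z_j) exp(−2π ε i Σ (t_j z_j + conj(t_j z_j))) ∏ d_ℂ z_j
  = (−ε i)^l (∏ conj(t_j)^{γ_j}) exp(−2π Σ t_j conj t_j)`. -/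
theorem gaussian_fourier_complex_multi (n : ℕ) (hn : 1 ≤ n) (ε : ℝ)
    (hε : ε = 1 ∨ ε = -1) (γ : Fin n → ℕ) (t : Fin n → ℂ) :
    (∫ z : Fin n → ℂ,
        (∏ j, (z j) ^ (γ j)) *
          Complex.exp (-(2 * π * ∑ j, z j * conj (z j))) *
          Complex.exp (-(2 * π * (ε : ℂ) * Complex.I *
            ∑ j, (t j * z j + conj (t j * z j))))
      ∂(MeasureTheory.Measure.pi fun _ : Fin n => (2 : ENNReal) • (volume : Measure ℂ))) =
      (-(ε : ℂ) * Complex.I) ^ (∑ j, γ j) * (∏ j, (conj (t j)) ^ (γ j)) *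
        Complex.exp (-(2 * π * ∑ j, t j * conj (t j))) :=
  gaussian_fourier_complex_multi_general n ε hε γ t
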